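/- The distribution with density p(ℓ) = (16/π²)·(f(ℓ)+g(ℓ))/((ℓ²+4)·ℓ) on (2, ∞) has infinite mean: ∫₂^∞ ℓ·p(ℓ) dℓ = ∞. -/

import Mathlib

/-!
For `ℓ ≥ 3` the arctan difference in `f` is at least `arctan (3/2) - arctan (2/3) > 0` and `g ≥ 0`,
so `ℓ · p(ℓ)` is bounded below by a positive multiple of `1/ℓ`, which is not integrable at infinity.
-/

open MeasureTheory Set Real
open scoped ENNReal

noncomputable def sideDensity (l : ℝ) : ℝ :=
  (16 / Real.pi ^ 2) *
    ((l * (Real.arctan ((l + Real.sqrt (l ^ 2 - 4)) / 2) -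
        Real.arctan ((l - Real.sqrt (l ^ 2 - 4)) / 2))) +
      (Real.log (l + Real.sqrt (l ^ 2 - 4)) - Real.log (l - Real.sqrt (l ^ 2 - 4)))) /
    ((l ^ 2 + 4) * l)

lemma setLIntegral_ofReal_inv_Ioi_eq_top {a : ℝ} (ha : 0 ≤ a) :
    ∫⁻ x in Ioi a, ENNReal.ofReal x⁻¹ = ⊤ := by
  by_contra h
  have hpos : 0 ≤ᵐ[volume.restrict (Ioi a)] fun x : ℝ => x⁻¹ := by
    filter_upwards [ae_restrict_mem measurableSet_Ioi] with x hx
    exact inv_nonneg.2 (ha.trans hx.le)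
  exact not_integrableOn_Ioi_inv
    ((lintegral_ofReal_ne_top_iff_integrable (by fun_prop) hpos).1 h)

lemma setLIntegral_Ioi_eq_top_of_inv_le {a c : ℝ} {f : ℝ → ℝ} (ha : 0 ≤ a) (hc : 0 < c)
    (hf : ∀ x ∈ Ioi a, c * x⁻¹ ≤ f x) : ∫⁻ x in Ioi a, ENNReal.ofReal (f x) = ⊤ := by
  refine eq_top_mono ?_ (ENNReal.mul_top (ENNReal.ofReal_pos.2 hc).ne')
  calc ENNReal.ofReal c * ⊤
      = ∫⁻ x in Ioi a, ENNReal.ofReal c * ENNReal.ofReal x⁻¹ := by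
        rw [lintegral_const_mul' _ _ ENNReal.ofReal_ne_top, setLIntegral_ofReal_inv_Ioi_eq_top ha]
    _ ≤ ∫⁻ x in Ioi a, ENNReal.ofReal (f x) := by
        refine setLIntegral_mono' measurableSet_Ioi fun x hx => ?_
        rw [← ENNReal.ofReal_mul hc.le]
        exact ENNReal.ofReal_le_ofReal (hf x hx)

lemma log_sub_log_sqrt_nonneg {l : ℝ} (hl : 0 < l) :
    0 ≤ log (l + √(l ^ 2 - 4)) - log (l - √(l ^ 2 - 4)) := by
  have hs : √(l ^ 2 - 4) < l := by
    rw [sqrt_lt' hl]; linarith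
  have := sqrt_nonneg (l ^ 2 - 4)
  exact sub_nonneg.2 (log_le_log (by linarith) (by linarith))

lemma arctan_sub_arctan_sqrt_ge {l : ℝ} (hl : 3 ≤ l) :
    arctan (3 / 2) - arctan (2 / 3) ≤
      arctan ((l + √(l ^ 2 - 4)) / 2) - arctan ((l - √(l ^ 2 - 4)) / 2) := by
  have hs : l - 4 / 3 ≤ √(l ^ 2 - 4) := by
    rw [le_sqrt (by linarith) (by nlinarith)]; nlinarith
  have := sqrt_nonneg (l ^ 2 - 4)
  have h₁ := arctan_strictMono.monotone (show 3 / 2 ≤ (l + √(l ^ 2 - 4)) / 2 by linarith)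
  have h₂ := arctan_strictMono.monotone (show (l - √(l ^ 2 - 4)) / 2 ≤ 2 / 3 by linarith)
  linarith

lemma inv_le_mul_sideDensity {l : ℝ} (hl : 3 ≤ l) :
    8 * (arctan (3 / 2) - arctan (2 / 3)) / π ^ 2 * l⁻¹ ≤ l * sideDensity l := by
  set c := arctan (3 / 2) - arctan (2 / 3)
  set A := arctan ((l + √(l ^ 2 - 4)) / 2) - arctan ((l - √(l ^ 2 - 4)) / 2)
  set G := log (l + √(l ^ 2 - 4)) - log (l - √(l ^ 2 - 4))
  have hl0 : 0 < l := by linarith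
  have hc : 0 ≤ c := sub_nonneg.2 (arctan_strictMono.monotone (by norm_num))
  have hA : c ≤ A := arctan_sub_arctan_sqrt_ge hl
  have hG : 0 ≤ G := log_sub_log_sqrt_nonneg hl0
  have hlA : 8 * c * (l ^ 2 + 4) ≤ 16 * l * (l * A + G) := by
    nlinarith [mul_le_mul_of_nonneg_left hA (sq_nonneg l), mul_nonneg hl0.le hG,
      mul_nonneg hc (show 0 ≤ l ^ 2 - 4 by nlinarith)]
  have hsd : l * sideDensity l = 16 * (l * A + G) / (π ^ 2 * (l ^ 2 + 4)) := by
    simp only [sideDensity, A, G]; field_simp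
  rw [hsd, ← div_eq_mul_inv, div_div, div_le_div_iff₀ (by positivity) (by positivity)]
  nlinarith [pi_pos]

theorem stmt_14 :
    ∫⁻ l in Set.Ioi (2 : ℝ), ENNReal.ofReal (l * sideDensity l) = ⊤ := by
  have hc : 0 < 8 * (arctan (3 / 2) - arctan (2 / 3)) / π ^ 2 :=
    div_pos (by linarith [arctan_strictMono (show (2 : ℝ) / 3 < 3 / 2 by norm_num)])
      (by positivity)
  refine eq_top_mono (lintegral_mono_set (Ioi_subset_Ioi (by norm_num : (2 : ℝ) ≤ 3))) ?_
  exact setLIntegral_Ioi_eq_top_of_inv_le (by norm_num) hc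
    fun l hl => inv_le_mul_sideDensity (le_of_lt hl)
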